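/- Let G be a simple graph on n nodes and consider an (α,ε)-weak attacker. With probability at least 1 − 2/n over the random choice of seeds and their colors, every node v of degree at least d₂* := 8·ln n/(α·ε²) satisfies: v ∈ R₀, or v has strictly more neighbors in W₀ than in B₀ (so that every such non-seed node is deterministically colored white in round one, i.e. every node of degree at least d₂* lies in R₀ ∪ W₁). -/

import Mathlib

open Finset
open scoped Classical

/-- The probability weight of a weak-attacker configuration `cfg : V → Option Bool`:
each node is, independently, a non-seed (`none`) with probability `1 - a`, a white seed
(`some true`) with probability `(1/2+ε)·a`, and a black seed (`some false`) with
probability `(1/2-ε)·a`. -/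
noncomputable def weakWeight {V : Type*} [Fintype V] (a ε : ℝ) (cfg : V → Option Bool) : ℝ :=
  ∏ v, (match cfg v with
    | none => 1 - a
    | some true => (1/2 + ε) * a
    | some false => (1/2 - ε) * a)

/-- The probability of an event `E` depending only on the random seeds and their colors,
for an `(a,ε)`-weak attacker. -/
noncomputable def weakPr₀ (V : Type*) [Fintype V] [DecidableEq V] (a ε : ℝ)
    (E : (V → Option Bool) → Prop) : ℝ :=
  ∑ cfg : V → Option Bool, if E cfg then weakWeight a ε cfg else 0

/-- The probability of an event `E cfg tie` for an `(a,ε)`-weak attacker, where `cfg` is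
the random seed configuration and `tie` an independent uniformly random assignment of
tie-breaking bits. -/
noncomputable def weakPr (V : Type*) [Fintype V] [DecidableEq V] (a ε : ℝ)
    (E : (V → Option Bool) → (V → Bool) → Prop) : ℝ :=
  ∑ cfg : V → Option Bool, ∑ tie : V → Bool,
    if E cfg tie then weakWeight a ε cfg * (1/2 : ℝ) ^ (Fintype.card V) else 0

/-- The (random) seed set `R₀` determined by a weak-attacker configuration. -/
def seedsOf {V : Type*} (cfg : V → Option Bool) : Set V := {v | (cfg v).isSome}

/-- The initial coloring determined by a weak-attacker configuration
(`true` = white, `false` = black; the value on non-seeds is irrelevant junk). -/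
def colOf {V : Type*} (cfg : V → Option Bool) (v : V) : Bool := (cfg v).getD false

/-! ### Auxiliary material -/

/-- Per-node weight. -/
noncomputable def wt (a ε : ℝ) : Option Bool → ℝ
  | none => 1 - a
  | some true => (1/2 + ε) * a
  | some false => (1/2 - ε) * a

lemma weakWeight_eq_prod_wt {V : Type*} [Fintype V] (a ε : ℝ) (cfg : V → Option Bool) :
    weakWeight a ε cfg = ∏ v, wt a ε (cfg v) :=
  Finset.prod_congr rfl fun v _ => by
    cases h : cfg v with
    | none => rfl
    | some b => cases b <;> rfl

lemma wt_nonneg {a ε : ℝ} (ha0 : 0 < a) (ha : a < 1/2) (he0 : 0 < ε) (he : ε < 1/2)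
    (o : Option Bool) : 0 ≤ wt a ε o := by
  cases o with
  | none => simp only [wt]; linarith
  | some b => cases b <;> · simp only [wt]; nlinarith

lemma sum_wt (a ε : ℝ) : ∑ o : Option Bool, wt a ε o = 1 := by
  rw [Fintype.sum_option, Fintype.sum_bool]
  simp only [wt]; ring

lemma sum_prod_pi {V : Type*} [Fintype V] [DecidableEq V] (f : V → Option Bool → ℝ) :
    ∑ cfg : V → Option Bool, ∏ v, f v (cfg v) = ∏ v, ∑ o : Option Bool, f v o := by
  rw [Finset.prod_univ_sum, Fintype.piFinset_univ]

lemma sum_weakWeight {V : Type*} [Fintype V] [DecidableEq V] (a ε : ℝ) :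
    ∑ cfg : V → Option Bool, weakWeight a ε cfg = 1 := by
  have h := sum_prod_pi (V := V) (fun _ o => wt a ε o)
  simp only [← weakWeight_eq_prod_wt, sum_wt, Finset.prod_const_one] at h
  exact h

/-- Normalization: complement rule. -/
lemma weakPr₀_compl (V : Type*) [Fintype V] [DecidableEq V] (a ε : ℝ)
    (E : (V → Option Bool) → Prop) :
    weakPr₀ V a ε E = 1 - weakPr₀ V a ε (fun c => ¬ E c) := by
  have h : weakPr₀ V a ε E + weakPr₀ V a ε (fun c => ¬ E c)
      = ∑ cfg : V → Option Bool, weakWeight a ε cfg := by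
    unfold weakPr₀
    rw [← Finset.sum_add_distrib]
    refine Finset.sum_congr rfl fun cfg _ => ?_
    by_cases hE : E cfg <;> simp [hE]
  rw [sum_weakWeight] at h
  linarith

section pernode

variable {V : Type*} [Fintype V] [DecidableEq V]

set_option maxHeartbeats 1000000 in
/-- The Chernoff bound for a single high-degree node. -/
lemma pernode_bound (G : SimpleGraph V) (n : ℕ) (hn0 : 0 < n)
    (α ε : ℝ) (hα0 : 0 < α) (hα : α < 1/2) (hε0 : 0 < ε) (hε : ε < 1/2) (v : V) :
    ∑ cfg : V → Option Bool,
      (if ¬ (8 * Real.log n / (α * ε^2) ≤ (G.degree v : ℝ) →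
          ((cfg v).isSome ∨
            (Finset.univ.filter fun u => G.Adj v u ∧ cfg u = some false).card <
              (Finset.univ.filter fun u => G.Adj v u ∧ cfg u = some true).card))
        then weakWeight α ε cfg else 0) ≤ ((n : ℝ)^8)⁻¹ := by
  have h1e : (0:ℝ) < 1 - ε := by linarith
  have hwnn : ∀ cfg : V → Option Bool, 0 ≤ weakWeight α ε cfg := fun cfg => by
    rw [weakWeight_eq_prod_wt]
    exact Finset.prod_nonneg fun u _ => wt_nonneg hα0 hα hε0 hε _
  by_cases hd : 8 * Real.log n / (α * ε^2) ≤ (G.degree v : ℝ)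
  swap
  · have : ∀ cfg : V → Option Bool,
        (if ¬ (8 * Real.log n / (α * ε^2) ≤ (G.degree v : ℝ) →
          ((cfg v).isSome ∨
            (Finset.univ.filter fun u => G.Adj v u ∧ cfg u = some false).card <
              (Finset.univ.filter fun u => G.Adj v u ∧ cfg u = some true).card))
        then weakWeight α ε cfg else 0) = 0 := by
      intro cfg
      rw [if_neg]
      intro hcon
      exact hcon (fun h => absurd h hd)
    rw [Finset.sum_congr rfl fun cfg _ => this cfg, Finset.sum_const_zero]
    positivity
  -- main Chernoff case
  set N : Finset V := G.neighborFinset v with hN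
  set φ : Option Bool → ℝ := fun o =>
    (1-ε) ^ (if o = some true then 1 else 0) * ((1-ε)⁻¹) ^ (if o = some false then 1 else 0)
    with hφ
  have hφnn : ∀ o, 0 ≤ φ o := fun o => by
    apply mul_nonneg <;> apply pow_nonneg
    · linarith
    · positivity
  -- step 1: bound the indicator pointwise by the exponential-moment weight
  have step1 : ∀ cfg : V → Option Bool,
      (if ¬ (8 * Real.log n / (α * ε^2) ≤ (G.degree v : ℝ) →
          ((cfg v).isSome ∨
            (Finset.univ.filter fun u => G.Adj v u ∧ cfg u = some false).card <
              (Finset.univ.filter fun u => G.Adj v u ∧ cfg u = some true).card))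
        then weakWeight α ε cfg else 0)
      ≤ ∏ u, (wt α ε (cfg u) * (if u ∈ N then φ (cfg u) else 1)) := by
    intro cfg
    have hprod : ∏ u, (wt α ε (cfg u) * (if u ∈ N then φ (cfg u) else 1))
        = weakWeight α ε cfg * ∏ u ∈ N, φ (cfg u) := by
      rw [Finset.prod_mul_distrib, weakWeight_eq_prod_wt]
      congr 1
      rw [← Finset.prod_filter, Finset.filter_mem_eq_inter, Finset.univ_inter]
    rw [hprod]
    split_ifs with hbad
    case pos =>
      exact mul_nonneg (hwnn cfg) (Finset.prod_nonneg fun u _ => hφnn _)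
    case neg =>
      -- bad event: #white ≤ #black among neighbors; show 1 ≤ ∏ φ
      push_neg at hbad
      obtain ⟨-, -, hWB⟩ := hbad
      have hWB' : (Finset.univ.filter fun u => G.Adj v u ∧ cfg u = some true).card ≤
          (Finset.univ.filter fun u => G.Adj v u ∧ cfg u = some false).card := hWB
      have hsetW : (Finset.univ.filter fun u => G.Adj v u ∧ cfg u = some true)
          = N.filter (fun u => cfg u = some true) := by
        ext u; simp [hN, SimpleGraph.mem_neighborFinset]
      have hsetB : (Finset.univ.filter fun u => G.Adj v u ∧ cfg u = some false)
          = N.filter (fun u => cfg u = some false) := by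
        ext u; simp [hN, SimpleGraph.mem_neighborFinset]
      rw [hsetW, hsetB] at hWB'
      have hprodφ : ∏ u ∈ N, φ (cfg u)
          = (1-ε) ^ (N.filter (fun u => cfg u = some true)).card *
            ((1-ε)⁻¹) ^ (N.filter (fun u => cfg u = some false)).card := by
        simp only [hφ]
        rw [Finset.prod_mul_distrib, Finset.prod_pow_eq_pow_sum, Finset.prod_pow_eq_pow_sum,
          Finset.card_filter, Finset.card_filter]
      have hone : 1 ≤ ∏ u ∈ N, φ (cfg u) := by
        rw [hprodφ, inv_pow, ← div_eq_mul_inv, le_div_iff₀ (pow_pos h1e _), one_mul]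
        exact pow_le_pow_of_le_one (by linarith) (by linarith) hWB'
      nlinarith [hwnn cfg, hone]
  calc ∑ cfg : V → Option Bool,
      (if ¬ (8 * Real.log n / (α * ε^2) ≤ (G.degree v : ℝ) →
          ((cfg v).isSome ∨
            (Finset.univ.filter fun u => G.Adj v u ∧ cfg u = some false).card <
              (Finset.univ.filter fun u => G.Adj v u ∧ cfg u = some true).card))
        then weakWeight α ε cfg else 0)
      ≤ ∑ cfg : V → Option Bool, ∏ u, (wt α ε (cfg u) * (if u ∈ N then φ (cfg u) else 1)) :=
        Finset.sum_le_sum fun cfg _ => step1 cfg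
    _ = ∏ u, ∑ o : Option Bool, (wt α ε o * (if u ∈ N then φ o else 1)) :=
        sum_prod_pi (fun u o => wt α ε o * (if u ∈ N then φ o else 1))
    _ = ∏ u, (if u ∈ N then
          (1 - α) + ((1/2 + ε) * α * (1-ε) + (1/2 - ε) * α * (1-ε)⁻¹) else 1) := by
        refine Finset.prod_congr rfl fun u _ => ?_
        by_cases hu : u ∈ N
        · simp only [hu, if_true]
          rw [Fintype.sum_option, Fintype.sum_bool]
          simp only [wt, hφ]
          simp [pow_succ]
        · simp only [hu, if_false]
          simp only [mul_one]
          exact sum_wt α ε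
    _ = ((1 - α) + ((1/2 + ε) * α * (1-ε) + (1/2 - ε) * α * (1-ε)⁻¹)) ^ (G.degree v) := by
        rw [← Finset.prod_filter, Finset.filter_mem_eq_inter, Finset.univ_inter,
          Finset.prod_const, hN, SimpleGraph.card_neighborFinset_eq_degree]
    _ ≤ ((n : ℝ)^8)⁻¹ := by
        set S : ℝ := (1 - α) + ((1/2 + ε) * α * (1-ε) + (1/2 - ε) * α * (1-ε)⁻¹) with hS
        have hS0 : 0 ≤ S := by
          have h2 : 0 ≤ (1/2 - ε) * α * (1-ε)⁻¹ :=
            mul_nonneg (mul_nonneg (by linarith) hα0.le) (by positivity)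
          have h3 : 0 ≤ (1/2 + ε) * α * (1-ε) :=
            mul_nonneg (mul_nonneg (by linarith) hα0.le) h1e.le
          rw [hS]; linarith
        have hkey : (1/2 + ε) * (1-ε) + (1/2 - ε) * (1-ε)⁻¹ ≤ 1 - ε^2 := by
          have hdiff : (1 - ε^2) - ((1/2 + ε) * (1-ε) + (1/2 - ε) * (1-ε)⁻¹)
              = ε^2 / (2 * (1-ε)) := by
            field_simp
            ring
          nlinarith [div_nonneg (sq_nonneg ε) (by linarith : (0:ℝ) ≤ 2 * (1-ε))]
        have hSle : S ≤ 1 - α * ε^2 := by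
          have := mul_le_mul_of_nonneg_left hkey (le_of_lt hα0)
          rw [hS]; nlinarith
        have hexp : 1 - α * ε^2 ≤ Real.exp (-(α * ε^2)) := by
          have := Real.add_one_le_exp (-(α * ε^2))
          linarith
        have hα2 : 0 < α * ε^2 := by positivity
        calc S ^ (G.degree v) ≤ (Real.exp (-(α * ε^2))) ^ (G.degree v) :=
              pow_le_pow_left₀ hS0 (hSle.trans hexp) _
          _ = Real.exp ((G.degree v : ℝ) * (-(α * ε^2))) := (Real.exp_nat_mul _ _).symm
          _ ≤ Real.exp (-(8 * Real.log n)) := by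
              apply Real.exp_le_exp.mpr
              have h8 : 8 * Real.log n ≤ (G.degree v : ℝ) * (α * ε^2) :=
                (div_le_iff₀ hα2).mp hd
              nlinarith
          _ = ((n : ℝ)^8)⁻¹ := by
              rw [Real.exp_neg]
              congr 1
              rw [show (8 : ℝ) * Real.log n = ((8:ℕ) : ℝ) * Real.log n by norm_num,
                Real.exp_nat_mul, Real.exp_log (by exact_mod_cast hn0)]

end pernode

set_option maxHeartbeats 1000000 in
/-- for an `(α,ε)`-weak attacker on an `n`-node graph `G`, with probability at
least `1 − 2/n` every node `v` of degree at least `d₂* = 8·ln n/(αε²)` is a seed node or has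
strictly more neighbors among the white seeds than among the black seeds (and hence every
such node lies in `R₀ ∪ W₁`, being deterministically colored white in round one). -/
theorem weak_attacker_high_degree_nodes_white
    (V : Type*) [Fintype V] [DecidableEq V] (G : SimpleGraph V) (n : ℕ)
    (hn : Fintype.card V = n)
    (α ε : ℝ) (hα0 : 0 < α) (hα : α < 1/2) (hε0 : 0 < ε) (hε : ε < 1/2) :
    1 - 2 / (n : ℝ) ≤
      weakPr₀ V α ε (fun cfg =>
        ∀ v : V, 8 * Real.log n / (α * ε^2) ≤ (G.degree v : ℝ) →
          (cfg v).isSome ∨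
            (Finset.univ.filter fun u => G.Adj v u ∧ cfg u = some false).card <
              (Finset.univ.filter fun u => G.Adj v u ∧ cfg u = some true).card) := by
  rcases Nat.eq_zero_or_pos n with hn0 | hn0
  · -- empty graph: probability is 1
    subst hn0
    have hemp : IsEmpty V := Fintype.card_eq_zero_iff.mp hn
    have key : weakPr₀ V α ε (fun cfg =>
        ∀ v : V, 8 * Real.log (0:ℕ) / (α * ε^2) ≤ (G.degree v : ℝ) →
          (cfg v).isSome ∨
            (Finset.univ.filter fun u => G.Adj v u ∧ cfg u = some false).card <
              (Finset.univ.filter fun u => G.Adj v u ∧ cfg u = some true).card) = 1 := by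
      unfold weakPr₀
      rw [← sum_weakWeight (V := V) α ε]
      refine Finset.sum_congr rfl fun cfg _ => ?_
      exact if_pos (fun v => hemp.elim v)
    rw [key]
    norm_num
  have hwnn : ∀ cfg : V → Option Bool, 0 ≤ weakWeight α ε cfg := fun cfg => by
    rw [weakWeight_eq_prod_wt]
    exact Finset.prod_nonneg fun u _ => wt_nonneg hα0 hα hε0 hε _
  rw [weakPr₀_compl]
  have hunion : weakPr₀ V α ε (fun cfg => ¬ ∀ v : V,
        8 * Real.log n / (α * ε^2) ≤ (G.degree v : ℝ) →
          (cfg v).isSome ∨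
            (Finset.univ.filter fun u => G.Adj v u ∧ cfg u = some false).card <
              (Finset.univ.filter fun u => G.Adj v u ∧ cfg u = some true).card)
      ≤ ∑ v : V, ∑ cfg : V → Option Bool,
        (if ¬ (8 * Real.log n / (α * ε^2) ≤ (G.degree v : ℝ) →
          ((cfg v).isSome ∨
            (Finset.univ.filter fun u => G.Adj v u ∧ cfg u = some false).card <
              (Finset.univ.filter fun u => G.Adj v u ∧ cfg u = some true).card))
        then weakWeight α ε cfg else 0) := by
    unfold weakPr₀
    rw [Finset.sum_comm]
    apply Finset.sum_le_sum
    intro cfg _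
    by_cases hcfg : ¬ ∀ v : V,
        8 * Real.log n / (α * ε^2) ≤ (G.degree v : ℝ) →
          (cfg v).isSome ∨
            (Finset.univ.filter fun u => G.Adj v u ∧ cfg u = some false).card <
              (Finset.univ.filter fun u => G.Adj v u ∧ cfg u = some true).card
    · rw [if_pos hcfg]
      rw [not_forall] at hcfg
      obtain ⟨v₀, hv₀⟩ := hcfg
      have := Finset.single_le_sum
        (f := fun v => (if ¬ (8 * Real.log n / (α * ε^2) ≤ (G.degree v : ℝ) →
          ((cfg v).isSome ∨
            (Finset.univ.filter fun u => G.Adj v u ∧ cfg u = some false).card <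
              (Finset.univ.filter fun u => G.Adj v u ∧ cfg u = some true).card))
          then weakWeight α ε cfg else 0))
        (fun v _ => by split_ifs with h <;> first | exact le_rfl | exact hwnn cfg)
        (Finset.mem_univ v₀)
      exact le_trans (le_of_eq (if_pos hv₀).symm) this
    · rw [if_neg hcfg]
      exact Finset.sum_nonneg fun v _ => by
        split_ifs with h <;> first | exact le_rfl | exact hwnn cfg
  have hper : ∀ v : V, ∑ cfg : V → Option Bool,
        (if ¬ (8 * Real.log n / (α * ε^2) ≤ (G.degree v : ℝ) →
          ((cfg v).isSome ∨
            (Finset.univ.filter fun u => G.Adj v u ∧ cfg u = some false).card <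
              (Finset.univ.filter fun u => G.Adj v u ∧ cfg u = some true).card))
        then weakWeight α ε cfg else 0) ≤ ((n : ℝ)^8)⁻¹ :=
    fun v => pernode_bound G n hn0 α ε hα0 hα hε0 hε v
  have htot : (∑ v : V, ((n : ℝ)^8)⁻¹) = n * ((n : ℝ)^8)⁻¹ := by
    rw [Finset.sum_const, Finset.card_univ, hn, nsmul_eq_mul]
  have hnR : (1 : ℝ) ≤ n := by exact_mod_cast hn0
  have hfin : (n : ℝ) * ((n : ℝ)^8)⁻¹ ≤ 2 / n := by
    rw [← div_eq_mul_inv, div_le_div_iff₀ (by positivity) (by linarith)]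
    nlinarith [pow_le_pow_right₀ hnR (by norm_num : 2 ≤ 8)]
  have := (hunion.trans (Finset.sum_le_sum fun v _ => hper v)).trans
    (le_of_eq_of_le htot hfin)
  linarith
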